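/- Let G be a tree on X, ℓ a leaf, and suppose preferences P_i of all agents are single-peaked on G. If agent i's peak τ(P_i) lies in the path hull H(τ(P_{-i})) of the other agents' peaks, then agent i's report does not change the outcome: f^ℓ(P_i,P_{-i}) = π(ℓ, τ(P_{-i})). -/

import Mathlib

open SimpleGraph

/-- `z` lies on a path from `x` to `y` in `G` (in a tree, the unique path). -/
def pathSet {X : Type*} (G : SimpleGraph X) (x y z : X) : Prop :=
  ∃ p : G.Walk x y, p.IsPath ∧ z ∈ p.support

/-- The path hull `H(S)`: union of paths between pairs of nodes of `S`. -/
def hull {X : Type*} (G : SimpleGraph X) (S : Set X) (z : X) : Prop :=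
  ∃ x ∈ S, ∃ y ∈ S, pathSet G x y z

/-- `m` is a distance minimizer of `x` on the path hull of `S`. -/
def isMinimizer {X : Type*} (G : SimpleGraph X) (x : X) (S : Set X) (m : X) : Prop :=
  hull G S m ∧ ∀ y, hull G S y → G.dist x m ≤ G.dist x y

/-- `ℓ` is a leaf: it has exactly one neighbor. -/
def isLeaf {X : Type*} (G : SimpleGraph X) (ℓ : X) : Prop := ∃! x, G.Adj ℓ x

/-- `t` is the top-ranked alternative of the strict preference `P`. -/
def isTop {X : Type*} (P : X → X → Prop) (t : X) : Prop := ∀ y, y ≠ t → P t y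

/-- `P` with peak `t` is single-peaked on the tree `G`. -/
def singlePeakedAt {X : Type*} (G : SimpleGraph X) (P : X → X → Prop) (t : X) : Prop :=
  ∀ a b, a ≠ b → pathSet G t a b → P b a

section aux
open Classical
variable {X : Type*} {G : SimpleGraph X}

lemma pathSet_symm {x y z : X} (h : pathSet G x y z) : pathSet G y x z := by
  obtain ⟨p, hp, hz⟩ := h
  exact ⟨p.reverse, hp.reverse, by simpa [SimpleGraph.Walk.support_reverse] using hz⟩

lemma path_length_eq_dist (hG : G.IsTree) {u v : X} (p : G.Walk u v) (hp : p.IsPath) :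
    p.length = G.dist u v := by
  obtain ⟨q, hq, hql⟩ := (hG.isConnected u v).exists_path_of_dist
  have := (hG.existsUnique_path u v).unique hp hq
  rw [this, hql]

lemma isPath_append {u v w : X} {p : G.Walk u v} {q : G.Walk v w}
    (hp : p.IsPath) (hq : q.IsPath)
    (h : ∀ x ∈ p.support, x ∈ q.support → x = v) : (p.append q).IsPath := by
  rw [SimpleGraph.Walk.isPath_def, SimpleGraph.Walk.support_append]
  have hqn : q.support.Nodup := hq.support_nodup
  rw [q.support_eq_cons] at hqn
  refine List.Nodup.append hp.support_nodup (List.nodup_cons.mp hqn).2 ?_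
  intro x hxp hxq
  have hx : x = v := h x hxp (List.mem_of_mem_tail hxq)
  subst hx
  exact (List.nodup_cons.mp hqn).1 hxq

lemma exists_split {u v : X} (w : G.Walk u v) (pred : X → Prop) (hv : pred v) :
    ∃ z, pred z ∧ ∃ (w1 : G.Walk u z) (w2 : G.Walk z v), w = w1.append w2 ∧
      ∀ x ∈ w1.support, pred x → x = z := by
  revert hv
  induction w with
  | nil =>
    intro hv
    exact ⟨_, hv, SimpleGraph.Walk.nil, SimpleGraph.Walk.nil, rfl,
      fun x hx _ => by simpa using hx⟩
  | @cons a b c h q ih =>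
    intro hv
    by_cases ha : pred a
    · exact ⟨a, ha, SimpleGraph.Walk.nil, SimpleGraph.Walk.cons h q, rfl,
        fun x hx _ => by simpa using hx⟩
    · obtain ⟨z, hz, w1, w2, heq, hfirst⟩ := ih hv
      refine ⟨z, hz, SimpleGraph.Walk.cons h w1, w2, by simp [heq], ?_⟩
      intro x hx hpx
      rw [SimpleGraph.Walk.support_cons] at hx
      rcases List.mem_cons.mp hx with hx | hx
      · exact absurd (hx ▸ hpx) ha
      · exact hfirst x hx hpx

lemma median (hG : G.IsTree) (ℓ c c' : X) :
    ∃ z, pathSet G c c' z ∧ G.dist ℓ c = G.dist ℓ z + G.dist z c ∧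
      G.dist ℓ c' = G.dist ℓ z + G.dist z c' := by
  obtain ⟨q, hq⟩ := (hG.existsUnique_path c c').exists
  obtain ⟨r, hr⟩ := (hG.existsUnique_path ℓ c').exists
  obtain ⟨z, hz, r1, r2, heq, hfirst⟩ := exists_split r (· ∈ q.support) q.end_mem_support
  have hr1 : r1.IsPath := SimpleGraph.Walk.IsPath.of_append_left (heq ▸ hr)
  have q1 := q.takeUntil z hz
  set q1 := q.takeUntil z hz with hq1def
  set q2 := q.dropUntil z hz with hq2def
  have hq1 : q1.IsPath := hq.takeUntil hz
  have hq2 : q2.IsPath := hq.dropUntil hz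
  have hq2sub : q2.support ⊆ q.support := q.support_dropUntil_subset hz
  have hq1sub : q1.support ⊆ q.support := q.support_takeUntil_subset hz
  have hP1 : (r1.append q2).IsPath := by
    refine isPath_append hr1 hq2 ?_
    intro x hx hxq
    exact hfirst x hx (hq2sub hxq)
  have hP2 : (r1.append q1.reverse).IsPath := by
    refine isPath_append hr1 hq1.reverse ?_
    intro x hx hxq
    rw [SimpleGraph.Walk.support_reverse, List.mem_reverse] at hxq
    exact hfirst x hx (hq1sub hxq)
  have d1 : G.dist ℓ c' = r1.length + q2.length := by
    rw [← path_length_eq_dist hG _ hP1, SimpleGraph.Walk.length_append]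
  have d2 : G.dist ℓ c = r1.length + q1.length := by
    rw [← path_length_eq_dist hG _ hP2, SimpleGraph.Walk.length_append,
      SimpleGraph.Walk.length_reverse]
  have d3 : G.dist ℓ z = r1.length := (path_length_eq_dist hG r1 hr1).symm
  have d4 : G.dist z c = q1.length := by
    rw [← path_length_eq_dist hG _ hq1.reverse, SimpleGraph.Walk.length_reverse]
  have d5 : G.dist z c' = q2.length := (path_length_eq_dist hG q2 hq2).symm
  exact ⟨z, ⟨q, hq, hz⟩, by omega, by omega⟩

lemma side (hG : G.IsTree) {x z y s m : X} (p1 : G.Walk x z) (p2 : G.Walk z y)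
    (hp : (p1.append p2).IsPath) (hm : m ∈ p2.support)
    (A : G.Walk m s) (hA : A.IsPath)
    (hint : ∀ w ∈ A.support, w ∈ (p1.append p2).support → w = m)
    (B : G.Walk z m) (hB : B.IsPath) :
    ∀ w, w ∈ B.support ∨ w ∈ A.support → pathSet G x s w := by
  have hp2 : p2.IsPath := hp.of_append_right
  set q1 := p2.takeUntil m hm with hq1def
  have hq1 : q1.IsPath := hp2.takeUntil hm
  have hBq1 : B = q1 := (hG.existsUnique_path z m).unique hB hq1
  have hq1sub : q1.support ⊆ p2.support := p2.support_takeUntil_subset hm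
  have hC : (p1.append q1).IsPath := by
    have : ((p1.append q1).append (p2.dropUntil m hm)).IsPath := by
      rw [← SimpleGraph.Walk.append_assoc, hq1def, p2.take_spec hm]
      exact hp
    exact this.of_append_left
  have hCsub : (p1.append q1).support ⊆ (p1.append p2).support := by
    intro w hw
    rw [SimpleGraph.Walk.mem_support_append_iff] at hw ⊢
    exact hw.imp id (fun h => hq1sub h)
  have hP : ((p1.append q1).append A).IsPath := by
    refine isPath_append hC hA ?_
    intro w hw hwA
    exact hint w hwA (hCsub hw)
  intro w hw
  refine ⟨(p1.append q1).append A, hP, ?_⟩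
  rw [SimpleGraph.Walk.mem_support_append_iff]
  rcases hw with hw | hw
  · left
    rw [SimpleGraph.Walk.mem_support_append_iff]
    right; rw [← hBq1]; exact hw
  · right; exact hw

lemma key (hG : G.IsTree) {x y z s w : X}
    (hz : pathSet G x y z) (hw : pathSet G z s w) :
    pathSet G x s w ∨ pathSet G y s w := by
  obtain ⟨p, hp, hzp⟩ := hz
  obtain ⟨q, hq, hwq⟩ := hw
  obtain ⟨m, hm, A, B, heq, hfirst⟩ :=
    exists_split q.reverse (· ∈ p.support) hzp
  -- A : s → m, B : m → z,  q.reverse = A.append B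
  have hA : A.IsPath := SimpleGraph.Walk.IsPath.of_append_left (heq ▸ hq.reverse)
  have hB : B.IsPath := SimpleGraph.Walk.IsPath.of_append_right (p := A) (heq ▸ hq.reverse)
  set p1 := p.takeUntil z hzp with hp1def
  set p2 := p.dropUntil z hzp with hp2def
  have hpp : (p1.append p2).IsPath := by rw [p.take_spec hzp]; exact hp
  have hsupp : (p1.append p2).support = p.support := by rw [p.take_spec hzp]
  have hwAB : w ∈ B.support ∨ w ∈ A.support := by
    have : w ∈ q.reverse.support := by
      rw [SimpleGraph.Walk.support_reverse, List.mem_reverse]; exact hwq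
    rw [heq, SimpleGraph.Walk.mem_support_append_iff] at this
    exact this.symm
  have hm' : m ∈ (p1.append p2).support := by rw [hsupp]; exact hm
  rw [SimpleGraph.Walk.mem_support_append_iff] at hm'
  have hAr : ∀ u ∈ A.reverse.support, u ∈ p.support → u = m := by
    intro u hu hup
    rw [SimpleGraph.Walk.support_reverse, List.mem_reverse] at hu
    exact hfirst u hu hup
  rcases hm' with hm1 | hm2
  · -- m on x-side: build path from y
    right
    have hpp' : (p2.reverse.append p1.reverse).IsPath := by
      rw [← SimpleGraph.Walk.reverse_append]; exact hpp.reverse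
    have hm1' : m ∈ p1.reverse.support := by
      rw [SimpleGraph.Walk.support_reverse, List.mem_reverse]; exact hm1
    refine side hG p2.reverse p1.reverse hpp' hm1' A.reverse hA.reverse ?_ B.reverse hB.reverse w ?_
    · intro u hu hup
      refine hAr u hu ?_
      rw [← SimpleGraph.Walk.reverse_append, SimpleGraph.Walk.support_reverse,
        List.mem_reverse, hsupp] at hup
      exact hup
    · rcases hwAB with h | h
      · left; rw [SimpleGraph.Walk.support_reverse, List.mem_reverse]; exact h
      · right; rw [SimpleGraph.Walk.support_reverse, List.mem_reverse]; exact h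
  · -- m on y-side: build path from x
    left
    refine side hG p1 p2 hpp hm2 A.reverse hA.reverse ?_ B.reverse hB.reverse w ?_
    · intro u hu hup
      exact hAr u hu (hsupp ▸ hup)
    · rcases hwAB with h | h
      · left; rw [SimpleGraph.Walk.support_reverse, List.mem_reverse]; exact h
      · right; rw [SimpleGraph.Walk.support_reverse, List.mem_reverse]; exact h


lemma hull_mono {S T : Set X} (hST : S ⊆ T) {z : X}
    (hz : ∃ x ∈ S, ∃ y ∈ S, pathSet G x y z) : ∃ x ∈ T, ∃ y ∈ T, pathSet G x y z := by
  obtain ⟨a, ha, b, hb, hab⟩ := hz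
  exact ⟨a, hST ha, b, hST hb, hab⟩

lemma hull_to_point (hG : G.IsTree) {S : Set X} {c' x w : X}
    (hc' : ∃ a ∈ S, ∃ b ∈ S, pathSet G a b c') (hx : x ∈ S)
    (h : pathSet G c' x w) : ∃ a ∈ S, ∃ b ∈ S, pathSet G a b w := by
  obtain ⟨a, ha, b, hb, hab⟩ := hc'
  rcases key hG hab h with h' | h'
  · exact ⟨a, ha, x, hx, h'⟩
  · exact ⟨b, hb, x, hx, h'⟩

lemma hull_convex (hG : G.IsTree) {S : Set X} {c c' w : X}
    (hc : ∃ a ∈ S, ∃ b ∈ S, pathSet G a b c)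
    (hc' : ∃ a ∈ S, ∃ b ∈ S, pathSet G a b c')
    (hw : pathSet G c c' w) : ∃ a ∈ S, ∃ b ∈ S, pathSet G a b w := by
  obtain ⟨a, ha, b, hb, hab⟩ := hc
  rcases key hG hab hw with h' | h'
  · exact hull_to_point hG hc' ha (pathSet_symm h')
  · exact hull_to_point hG hc' hb (pathSet_symm h')

lemma hull_insert (hG : G.IsTree) {S : Set X} {p0 z : X}
    (hp0 : ∃ a ∈ S, ∃ b ∈ S, pathSet G a b p0)
    (hz : ∃ a ∈ insert p0 S, ∃ b ∈ insert p0 S, pathSet G a b z) :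
    ∃ a ∈ S, ∃ b ∈ S, pathSet G a b z := by
  obtain ⟨a, ha, b, hb, hab⟩ := hz
  rcases ha with ha | ha <;> rcases hb with hb | hb
  · -- a = p0, b = p0
    subst ha; subst hb
    obtain ⟨p, hp, hzp⟩ := hab
    rw [(SimpleGraph.Walk.isPath_iff_eq_nil (p := p)).mp hp] at hzp
    simp only [SimpleGraph.Walk.support_nil, List.mem_singleton] at hzp
    subst hzp
    exact hp0
  · subst ha
    obtain ⟨x0, hx0, y0, hy0, hxy⟩ := hp0
    rcases key hG hxy hab with h' | h'
    · exact ⟨x0, hx0, b, hb, h'⟩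
    · exact ⟨y0, hy0, b, hb, h'⟩
  · subst hb
    obtain ⟨x0, hx0, y0, hy0, hxy⟩ := hp0
    rcases key hG hxy (pathSet_symm hab) with h' | h'
    · exact ⟨x0, hx0, a, ha, h'⟩
    · exact ⟨y0, hy0, a, ha, h'⟩
  · exact ⟨a, ha, b, hb, hab⟩

end aux

theorem peak_in_hull_no_influence {X : Type*} [Fintype X]
    (G : SimpleGraph X) (hG : G.IsTree)
    (ℓ : X) (hℓ : isLeaf G ℓ)
    (n : ℕ)
    (P : Fin n → (X → X → Prop)) (hP : ∀ i, IsStrictTotalOrder X (P i))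
    (t : Fin n → X) (ht : ∀ i, isTop (P i) (t i))
    (hsp : ∀ i, singlePeakedAt G (P i) (t i))
    (i : Fin n)
    (hmem : hull G {x : X | ∃ j : Fin n, j ≠ i ∧ t j = x} (t i))
    (c c' : X)
    (hc : isMinimizer G ℓ (Set.range t) c)
    (hc' : isMinimizer G ℓ {x : X | ∃ j : Fin n, j ≠ i ∧ t j = x} c') :
    c = c' := by
  classical
  set S : Set X := {x : X | ∃ j : Fin n, j ≠ i ∧ t j = x} with hSdef
  have hSsub : ∀ z, hull G S z → hull G (Set.range t) z := by
    intro z hz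
    exact hull_mono (fun x hx => by obtain ⟨j, _, hj⟩ := hx; exact ⟨j, hj⟩) hz
  have hcS : hull G S c := by
    refine hull_insert hG hmem ?_
    refine hull_mono ?_ hc.1
    rintro x ⟨j, rfl⟩
    by_cases hj : j = i
    · subst hj; exact Set.mem_insert _ _
    · exact Set.mem_insert_of_mem _ ⟨j, hj, rfl⟩
  have e1 : G.dist ℓ c ≤ G.dist ℓ c' := hc.2 c' (hSsub c' hc'.1)
  have e2 : G.dist ℓ c' ≤ G.dist ℓ c := hc'.2 c hcS
  obtain ⟨z, hzp, h1, h2⟩ := median hG ℓ c c'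
  have hzS : hull G S z := hull_convex hG hcS hc'.1 hzp
  have e3 : G.dist ℓ c' ≤ G.dist ℓ z := hc'.2 z hzS
  have e4 : G.dist ℓ c ≤ G.dist ℓ z := hc.2 z (hSsub z hzS)
  have hzc : G.dist z c = 0 := by omega
  have hzc' : G.dist z c' = 0 := by omega
  have hzc2 : z = c := ((hG.isConnected z c).dist_eq_zero_iff).mp hzc
  have hzc'2 : z = c' := ((hG.isConnected z c').dist_eq_zero_iff).mp hzc'
  rw [← hzc2, ← hzc'2]
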